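/- For a fixed matrix Θ ∈ ℝ^{n×p} with Frobenius norm ‖Θ‖_F ≠ 0, and any matrices U ∈ ℝ^{n×p}, V ∈ ℝ^{p×p} with orthonormal columns (UᵀU = I_p and VᵀV = I_p), the sum over k = 1,…,p of (U_kᵀ Θ V_k)² / ‖Θ‖_F² is at most 1, where U_k and V_k denote the k-th columns of U and V. -/

import Mathlib

/-!
The numerators are the squared diagonal entries of `Uᵀ Θ V`, so their sum is at most
`‖Uᵀ Θ V‖_F²`. Multiplying by a matrix with orthonormal columns does not increase the
Frobenius norm: row by row this is Bessel's inequality `‖Uᵀ x‖ ≤ ‖x‖`, which holds because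
`U Uᵀ x` is the orthogonal projection of `x`, whence `‖x‖² = ‖Uᵀ x‖² + ‖x - U Uᵀ x‖²`.
-/

open Matrix Finset

section

variable {l m n : Type*} [Fintype l] [Fintype m] [Fintype n]

theorem sum_sq_diag_le (A : Matrix n n ℝ) : ∑ k, A k k ^ 2 ≤ ∑ i, ∑ j, A i j ^ 2 :=
  sum_le_sum fun i _ => single_le_sum (fun j _ => sq_nonneg (A i j)) (mem_univ i)

variable [DecidableEq n]

theorem vecMul_dotProduct_vecMul_le {U : Matrix m n ℝ} (hU : Uᵀ * U = 1) (x : m → ℝ) :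
    x ᵥ* U ⬝ᵥ x ᵥ* U ≤ x ⬝ᵥ x := by
  set w := x ᵥ* U
  have hxy : x ⬝ᵥ U *ᵥ w = w ⬝ᵥ w := by rw [dotProduct_mulVec]
  have hyy : U *ᵥ w ⬝ᵥ U *ᵥ w = w ⬝ᵥ w := by
    rw [dotProduct_mulVec, vecMul_mulVec, hU, vecMul_one]
  have := dotProduct_self_star_nonneg (x - U *ᵥ w)
  simp only [star_trivial, sub_dotProduct, dotProduct_sub, hxy, hyy,
    dotProduct_comm (U *ᵥ w) x] at this
  linarith

theorem sum_sq_vecMul_le {U : Matrix m n ℝ} (hU : Uᵀ * U = 1) (x : m → ℝ) :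
    ∑ k, (x ᵥ* U) k ^ 2 ≤ ∑ i, x i ^ 2 := by
  simpa only [dotProduct, sq] using vecMul_dotProduct_vecMul_le hU x

theorem sum_sq_mul_le {V : Matrix m n ℝ} (hV : Vᵀ * V = 1) (A : Matrix l m ℝ) :
    ∑ i, ∑ k, (A * V) i k ^ 2 ≤ ∑ i, ∑ j, A i j ^ 2 :=
  sum_le_sum fun i _ => sum_sq_vecMul_le hV (A i)

theorem sum_sq_transpose_mul_le {U : Matrix m n ℝ} (hU : Uᵀ * U = 1) (A : Matrix m l ℝ) :
    ∑ k, ∑ j, (Uᵀ * A) k j ^ 2 ≤ ∑ i, ∑ j, A i j ^ 2 := by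
  have := sum_sq_mul_le hU Aᵀ
  rw [← transpose_transpose (Uᵀ * A), transpose_mul, transpose_transpose]
  simpa only [transpose_apply, sum_comm (γ := m), sum_comm (γ := n)] using this

end

theorem pve_sum_le_one_general (n p : ℕ) (Θ : Matrix (Fin n) (Fin p) ℝ)
    (U : Matrix (Fin n) (Fin p) ℝ) (V : Matrix (Fin p) (Fin p) ℝ)
    (hU : Uᵀ * U = 1) (hV : Vᵀ * V = 1) :
    ∑ k, (∑ i, ∑ j, U i k * Θ i j * V j k) ^ 2 / (∑ i, ∑ j, (Θ i j) ^ 2) ≤ 1 := by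
  have hdiag : ∀ k, ∑ i, ∑ j, U i k * Θ i j * V j k = (Uᵀ * Θ * V) k k := by
    intro k
    simp only [mul_apply, transpose_apply, sum_mul]
    exact sum_comm
  rw [← sum_div]
  refine div_le_one_of_le₀ ?_ (by positivity)
  calc ∑ k, (∑ i, ∑ j, U i k * Θ i j * V j k) ^ 2
      = ∑ k, (Uᵀ * Θ * V) k k ^ 2 := by simp only [hdiag]
    _ ≤ ∑ k, ∑ l, (Uᵀ * Θ * V) k l ^ 2 := sum_sq_diag_le _
    _ ≤ ∑ k, ∑ j, (Uᵀ * Θ) k j ^ 2 := sum_sq_mul_le hV _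
    _ ≤ ∑ i, ∑ j, Θ i j ^ 2 := sum_sq_transpose_mul_le hU Θ

/-- For fixed Θ with nonzero Frobenius norm and U, V with orthonormal
columns, the sum over k of (U_kᵀ Θ V_k)² / ‖Θ‖_F² is at most 1. -/
theorem pve_sum_le_one (n p : ℕ) (Θ : Matrix (Fin n) (Fin p) ℝ)
    (U : Matrix (Fin n) (Fin p) ℝ) (V : Matrix (Fin p) (Fin p) ℝ)
    (hU : Uᵀ * U = 1) (hV : Vᵀ * V = 1)
    (hΘ : (∑ i, ∑ j, (Θ i j) ^ 2) ≠ 0) :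
    ∑ k, (∑ i, ∑ j, U i k * Θ i j * V j k) ^ 2 / (∑ i, ∑ j, (Θ i j) ^ 2) ≤ 1 :=
  pve_sum_le_one_general n p Θ U V hU hV
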